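/- arXiv:2410.15824 — 4 statements merged into one kernel-verified Lean document; each statement's English description precedes it below -/
import Mathlib

section
/- Let X₁ and X₂ be independent nonnegative random variables, each regularly varying at infinity with the same index α > 0, i.e. P[Xᵢ > x] = x^{-α} Lᵢ(x) for slowly varying Lᵢ. Then P[X₁ − X₂ > x] ∼ P[X₁ > x] as x → ∞, and P[X₁ − X₂ < −x] ∼ P[X₂ > x] as x → ∞. -/
/-!
Since `X₂ ≥ 0`, the event `{X₁ - X₂ > x}` lies in `{X₁ > x}`. Conversely, for `t > 1` independence
gives `P[X₁ - X₂ > x] ≥ P[X₁ > t x] · P[X₂ ≤ (t - 1) x]`, and by regular variation this lower bound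
divided by `P[X₁ > x]` tends to `t ^ (-α)`, which is as close to `1` as we like. The left tail of
`X₁ - X₂` is the right tail of `X₂ - X₁`.
-/

open MeasureTheory Filter

/-- `L` is slowly varying at `+∞`. -/
def SlowlyVarying (L : ℝ → ℝ) : Prop :=
  ∀ t : ℝ, 0 < t → Tendsto (fun x => L (t * x) / L x) atTop (nhds 1)

open Topology ProbabilityTheory

theorem SlowlyVarying.tendsto_div_of_eq_rpow_mul {L f : ℝ → ℝ} (hL : SlowlyVarying L) {α : ℝ}
    (hf : ∀ x, 0 < x → f x = x ^ (-α) * L x) {t : ℝ} (ht : 0 < t) :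
    Tendsto (fun x => f (t * x) / f x) atTop (𝓝 (t ^ (-α))) := by
  have h := (hL t ht).const_mul (t ^ (-α))
  rw [mul_one] at h
  refine h.congr' ?_
  filter_upwards [eventually_gt_atTop 0] with x hx
  rw [hf x hx, hf _ (mul_pos ht hx), mul_div_mul_comm, Real.mul_rpow ht.le hx.le,
    mul_div_cancel_right₀ _ (Real.rpow_pos_of_pos hx _).ne']

theorem tendsto_measure_setOf_le_atTop {Ω : Type*} [MeasurableSpace Ω] (μ : Measure Ω)
    [IsProbabilityMeasure μ] (X : Ω → ℝ) :
    Tendsto (fun y => (μ {ω | X ω ≤ y}).toReal) atTop (𝓝 1) := by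
  have hmono : Monotone fun y => {ω | X ω ≤ y} := fun a b hab ω h => le_trans h hab
  have hunion : ⋃ y : ℝ, {ω | X ω ≤ y} = Set.univ :=
    Set.eq_univ_of_forall fun ω => Set.mem_iUnion.2 ⟨X ω, le_refl (X ω)⟩
  have h := tendsto_measure_iUnion_atTop (μ := μ) hmono
  rw [hunion, measure_univ] at h
  exact (ENNReal.tendsto_toReal ENNReal.one_ne_top).comp h

theorem ProbabilityTheory.IndepFun.measure_lt_mul_measure_le_le {Ω : Type*} [MeasurableSpace Ω]
    {μ : Measure Ω} {X Y : Ω → ℝ} (hXY : IndepFun X Y μ) (x y : ℝ) :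
    μ {ω | x + y < X ω} * μ {ω | Y ω ≤ y} ≤ μ {ω | x < X ω - Y ω} := by
  refine (hXY.measure_inter_preimage_eq_mul (Set.Ioi (x + y)) (Set.Iic y) measurableSet_Ioi
    measurableSet_Iic).symm.le.trans (measure_mono fun ω ⟨hX, hY⟩ => ?_)
  simp only [Set.mem_preimage, Set.mem_Ioi, Set.mem_Iic] at hX hY
  show x < X ω - Y ω
  linarith

theorem exists_one_lt_lt_rpow (α : ℝ) {a : ℝ} (ha : a < 1) : ∃ t, 1 < t ∧ a < t ^ (-α) := by
  have h : Tendsto (fun t : ℝ => t ^ (-α)) (𝓝[>] 1) (𝓝 1) := by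
    simpa using (Real.continuousAt_rpow_const 1 (-α) (Or.inl one_ne_zero)).tendsto.mono_left
      nhdsWithin_le_nhds
  obtain ⟨t, hat, ht⟩ := ((h.eventually (lt_mem_nhds ha)).and self_mem_nhdsWithin).exists
  exact ⟨t, ht, hat⟩

theorem tendsto_measure_lt_sub_div_measure_lt {Ω : Type*} [MeasurableSpace Ω] (μ : Measure Ω)
    [IsProbabilityMeasure μ] {X Y : Ω → ℝ} (hY : ∀ ω, 0 ≤ Y ω) (hXY : IndepFun X Y μ)
    {α : ℝ} {L : ℝ → ℝ} (hL : SlowlyVarying L)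
    (hX : ∀ x, 0 < x → (μ {ω | x < X ω}).toReal = x ^ (-α) * L x) :
    Tendsto (fun x => (μ {ω | x < X ω - Y ω}).toReal / (μ {ω | x < X ω}).toReal)
      atTop (𝓝 1) := by
  refine tendsto_order.2 ⟨fun a ha => ?_, fun a ha => Eventually.of_forall fun x => ?_⟩
  · obtain ⟨t, ht, hat⟩ := exists_one_lt_lt_rpow α ha
    have hlower : Tendsto (fun x => (μ {ω | t * x < X ω}).toReal / (μ {ω | x < X ω}).toReal *
        (μ {ω | Y ω ≤ (t - 1) * x}).toReal) atTop (𝓝 (t ^ (-α))) := by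
      simpa using (hL.tendsto_div_of_eq_rpow_mul hX (by linarith)).mul
        ((tendsto_measure_setOf_le_atTop μ Y).comp
          (tendsto_id.const_mul_atTop (by linarith : (0 : ℝ) < t - 1)))
    filter_upwards [hlower.eventually (lt_mem_nhds hat)] with x hx
    refine hx.trans_le ?_
    rw [div_mul_eq_mul_div]
    gcongr
    have h := hXY.measure_lt_mul_measure_le_le x ((t - 1) * x)
    rw [show x + (t - 1) * x = t * x by ring] at h
    rw [← ENNReal.toReal_mul]
    exact ENNReal.toReal_mono (measure_ne_top μ _) h
  · have hsub : (μ {ω | x < X ω - Y ω}).toReal ≤ (μ {ω | x < X ω}).toReal :=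
      ENNReal.toReal_mono (measure_ne_top μ _) (measure_mono fun ω (h : x < X ω - Y ω) =>
        show x < X ω by linarith [hY ω])
    exact (div_le_one_of_le₀ hsub ENNReal.toReal_nonneg).trans_lt ha

theorem tail_sub_of_regularly_varying_general
    {Ω : Type*} [MeasurableSpace Ω] (μ : Measure Ω) [IsProbabilityMeasure μ]
    (X₁ X₂ : Ω → ℝ)
    (hX₁nn : ∀ ω, 0 ≤ X₁ ω) (hX₂nn : ∀ ω, 0 ≤ X₂ ω)
    (hindep : ProbabilityTheory.IndepFun X₁ X₂ μ)
    (α : ℝ) (L₁ L₂ : ℝ → ℝ)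
    (hL₁ : SlowlyVarying L₁) (hL₂ : SlowlyVarying L₂)
    (hT₁ : ∀ x : ℝ, 0 < x → (μ {ω | x < X₁ ω}).toReal = x ^ (-α) * L₁ x)
    (hT₂ : ∀ x : ℝ, 0 < x → (μ {ω | x < X₂ ω}).toReal = x ^ (-α) * L₂ x) :
    Tendsto (fun x : ℝ =>
        (μ {ω | x < X₁ ω - X₂ ω}).toReal / (μ {ω | x < X₁ ω}).toReal)
      atTop (nhds 1) ∧
    Tendsto (fun x : ℝ =>
        (μ {ω | X₁ ω - X₂ ω < -x}).toReal / (μ {ω | x < X₂ ω}).toReal)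
      atTop (nhds 1) := by
  refine ⟨tendsto_measure_lt_sub_div_measure_lt μ hX₂nn hindep hL₁ hT₁, ?_⟩
  have hneg : ∀ x : ℝ, {ω | X₁ ω - X₂ ω < -x} = {ω | x < X₂ ω - X₁ ω} := fun x =>
    Set.ext fun ω => show X₁ ω - X₂ ω < -x ↔ x < X₂ ω - X₁ ω from
      ⟨fun h => by linarith, fun h => by linarith⟩
  simpa only [hneg] using tendsto_measure_lt_sub_div_measure_lt μ hX₁nn hindep.symm hL₂ hT₂

/-- If `X₁, X₂` are independent nonnegative random variables, each regularly varying
at infinity with the same index `α > 0`, then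
`P[X₁ − X₂ > x] ∼ P[X₁ > x]` and `P[X₁ − X₂ < −x] ∼ P[X₂ > x]` as `x → ∞`. -/
theorem tail_sub_of_regularly_varying
    {Ω : Type*} [MeasurableSpace Ω] (μ : Measure Ω) [IsProbabilityMeasure μ]
    (X₁ X₂ : Ω → ℝ) (hX₁m : Measurable X₁) (hX₂m : Measurable X₂)
    (hX₁nn : ∀ ω, 0 ≤ X₁ ω) (hX₂nn : ∀ ω, 0 ≤ X₂ ω)
    (hindep : ProbabilityTheory.IndepFun X₁ X₂ μ)
    (α : ℝ) (hα : 0 < α) (L₁ L₂ : ℝ → ℝ)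
    (hL₁ : SlowlyVarying L₁) (hL₂ : SlowlyVarying L₂)
    (hT₁ : ∀ x : ℝ, 0 < x → (μ {ω | x < X₁ ω}).toReal = x ^ (-α) * L₁ x)
    (hT₂ : ∀ x : ℝ, 0 < x → (μ {ω | x < X₂ ω}).toReal = x ^ (-α) * L₂ x)
    (hpos₁ : ∀ x : ℝ, 0 < x → 0 < (μ {ω | x < X₁ ω}).toReal)
    (hpos₂ : ∀ x : ℝ, 0 < x → 0 < (μ {ω | x < X₂ ω}).toReal) :
    Tendsto (fun x : ℝ =>
        (μ {ω | x < X₁ ω - X₂ ω}).toReal / (μ {ω | x < X₁ ω}).toReal)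
      atTop (nhds 1) ∧
    Tendsto (fun x : ℝ =>
        (μ {ω | X₁ ω - X₂ ω < -x}).toReal / (μ {ω | x < X₂ ω}).toReal)
      atTop (nhds 1) :=
  tail_sub_of_regularly_varying_general μ X₁ X₂ hX₁nn hX₂nn hindep α L₁ L₂ hL₁ hL₂ hT₁ hT₂
end

section
/- Let X₁,…,Xₙ be independent nonnegative random variables, each regularly varying at infinity with the same index α ≥ 0 and with comparable tails. Then P[X₁ + ⋯ + Xₙ > x] ∼ Σᵢ P[Xᵢ > x] as x → ∞. -/
/-!
The single big jump principle. Write `D x = ∑ i, P[Xᵢ > x]`. On the one hand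
`⋃ᵢ {Xᵢ > x} ⊆ {∑ Xᵢ > x}`, and by Bonferroni and pairwise independence the union has probability
at least `D x - D x ^ 2`. On the other hand, if `∑ Xᵢ > x` then either one summand exceeds
`(1 - (n - 1) δ) x`, or two summands exceed `δ x`; hence
`P[∑ Xᵢ > x] ≤ D ((1 - (n - 1) δ) x) + D (δ x) ^ 2`. Regular variation makes `D (t x) / D x`
tend to `t ^ (-α)` and `D x → 0`, so the ratio is squeezed between `1` and `(1 - (n - 1) δ) ^ (-α)`
for every small `δ > 0`.
-/

open MeasureTheory Filter

open Topology ProbabilityTheory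

namespace SlowlyVarying

variable {L : ℝ → ℝ}

theorem eventually_ne_zero (hL : SlowlyVarying L) : ∀ᶠ x in atTop, L x ≠ 0 := by
  filter_upwards [(hL 1 one_pos).eventually_ne one_ne_zero] with x hx hLx
  simp [hLx] at hx

theorem tendsto_div_of_eq_mul_rpow (hL : SlowlyVarying L) {f : ℝ → ℝ} {C α : ℝ} (hC : C ≠ 0)
    (hf : ∀ x, 0 < x → f x = C * x ^ (-α) * L x) {t : ℝ} (ht : 0 < t) :
    Tendsto (fun x => f (t * x) / f x) atTop (𝓝 (t ^ (-α))) := by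
  have hlim := (hL t ht).const_mul (t ^ (-α))
  rw [mul_one] at hlim
  refine hlim.congr' ?_
  filter_upwards [eventually_gt_atTop 0] with x hx
  have hCx : C * x ^ (-α) ≠ 0 := mul_ne_zero hC (Real.rpow_pos_of_pos hx _).ne'
  rw [hf x hx, hf (t * x) (mul_pos ht hx), Real.mul_rpow ht.le hx.le,
    show C * (t ^ (-α) * x ^ (-α)) * L (t * x) = C * x ^ (-α) * (t ^ (-α) * L (t * x)) by ring,
    mul_div_mul_left _ _ hCx, mul_div_assoc]

end SlowlyVarying

theorem tendsto_div_one_of_quadratic_bounds {S D : ℝ → ℝ} {α κ : ℝ}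
    (hD : Tendsto D atTop (𝓝 0)) (hDpos : ∀ᶠ x in atTop, 0 < D x)
    (hDratio : ∀ t, 0 < t → Tendsto (fun x => D (t * x) / D x) atTop (𝓝 (t ^ (-α))))
    (hlower : ∀ᶠ x in atTop, D x - D x ^ 2 ≤ S x)
    (hupper : ∀ δ, ∀ᶠ x in atTop, S x ≤ D ((1 - κ * δ) * x) + D (δ * x) ^ 2) :
    Tendsto (fun x => S x / D x) atTop (𝓝 1) := by
  refine tendsto_order.2 ⟨fun a ha => ?_, fun a ha => ?_⟩
  · have h1 : Tendsto (fun x => 1 - D x) atTop (𝓝 1) := by simpa using hD.const_sub 1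
    filter_upwards [h1.eventually (lt_mem_nhds ha), hDpos, hlower] with x hax hx hlow
    calc a < 1 - D x := hax
      _ = (D x - D x ^ 2) / D x := by field_simp
      _ ≤ S x / D x := by gcongr
  · obtain ⟨δ, hδ, ht, hta⟩ : ∃ δ > 0, 0 < 1 - κ * δ ∧ (1 - κ * δ) ^ (-α) < a := by
      have hbase : Tendsto (fun δ : ℝ => 1 - κ * δ) (𝓝 0) (𝓝 1) :=
        (show Continuous fun δ : ℝ => 1 - κ * δ by fun_prop).tendsto' 0 1 (by simp)
      have hpow : Tendsto (fun δ : ℝ => (1 - κ * δ) ^ (-α)) (𝓝 0) (𝓝 1) := by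
        simpa using hbase.rpow_const (Or.inl one_ne_zero)
      have hsmall := (hbase.eventually (lt_mem_nhds one_pos)).and (hpow.eventually (gt_mem_nhds ha))
      obtain ⟨δ, ⟨h1, h2⟩, hδ⟩ :=
        ((hsmall.filter_mono nhdsWithin_le_nhds).and (self_mem_nhdsWithin (s := Set.Ioi 0))).exists
      exact ⟨δ, hδ, h1, h2⟩
    set t := 1 - κ * δ
    have hDδ : Tendsto (fun x => D (δ * x)) atTop (𝓝 0) :=
      hD.comp (tendsto_id.const_mul_atTop hδ)
    have hbound : Tendsto (fun x => D (t * x) / D x + D (δ * x) / D x * D (δ * x)) atTop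
        (𝓝 (t ^ (-α))) := by
      simpa using (hDratio t ht).add ((hDratio δ hδ).mul hDδ)
    filter_upwards [hbound.eventually (gt_mem_nhds hta), hDpos, hupper δ] with x hxa hx hup
    calc S x / D x ≤ (D (t * x) + D (δ * x) ^ 2) / D x := by gcongr
      _ = D (t * x) / D x + D (δ * x) / D x * D (δ * x) := by ring
      _ < a := hxa

theorem exists_lt_or_exists_pair_lt_of_lt_sum {ι : Type*} [Fintype ι] [Nonempty ι] {y : ι → ℝ}
    {x : ℝ} (δ : ℝ) (h : x < ∑ i, y i) :
    (∃ i, (1 - (Fintype.card ι - 1) * δ) * x < y i) ∨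
      ∃ i j, i ≠ j ∧ δ * x < y i ∧ δ * x < y j := by
  classical
  obtain ⟨k, hk⟩ := Finite.exists_max y
  by_cases hpair : ∃ j, j ≠ k ∧ δ * x < y j
  · obtain ⟨j, hjk, hj⟩ := hpair
    exact Or.inr ⟨k, j, hjk.symm, hj.trans_le (hk j), hj⟩
  · push Not at hpair
    refine Or.inl ⟨k, ?_⟩
    have hrest : ∑ i ∈ Finset.univ.erase k, y i ≤ (Fintype.card ι - 1) * (δ * x) := by
      calc ∑ i ∈ Finset.univ.erase k, y i ≤ ∑ i ∈ Finset.univ.erase k, δ * x :=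
            Finset.sum_le_sum fun i hi => hpair i (Finset.ne_of_mem_erase hi)
        _ = (Fintype.card ι - 1) * (δ * x) := by
          rw [Finset.sum_const, Finset.card_erase_of_mem (Finset.mem_univ k), Finset.card_univ,
            nsmul_eq_mul, Nat.cast_pred Fintype.card_pos]
    linarith [Finset.add_sum_erase Finset.univ y (Finset.mem_univ k)]

section Tails

variable {Ω ι : Type*} [MeasurableSpace Ω] {μ : Measure Ω}

theorem ProbabilityTheory.IndepFun.measureReal_inter_setOf_lt {f g : Ω → ℝ} (h : IndepFun f g μ)
    (y z : ℝ) :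
    μ.real ({ω | y < f ω} ∩ {ω | z < g ω}) = μ.real {ω | y < f ω} * μ.real {ω | z < g ω} := by
  rw [measureReal_def, measureReal_def, measureReal_def, ← ENNReal.toReal_mul]
  exact congrArg ENNReal.toReal
    (h.measure_inter_preimage_eq_mul _ _ measurableSet_Ioi measurableSet_Ioi)

theorem sum_sum_erase_measureReal_inter_le_sq [DecidableEq ι] {A : ι → Set Ω} (s : Finset ι)
    (hA : Pairwise fun i j => μ.real (A i ∩ A j) = μ.real (A i) * μ.real (A j)) :
    ∑ i ∈ s, ∑ j ∈ s.erase i, μ.real (A i ∩ A j) ≤ (∑ i ∈ s, μ.real (A i)) ^ 2 := by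
  rw [sq, Finset.sum_mul_sum]
  refine Finset.sum_le_sum fun i _ => ?_
  calc ∑ j ∈ s.erase i, μ.real (A i ∩ A j) = ∑ j ∈ s.erase i, μ.real (A i) * μ.real (A j) :=
        Finset.sum_congr rfl fun j hj => hA (Finset.ne_of_mem_erase hj).symm
    _ ≤ ∑ j ∈ s, μ.real (A i) * μ.real (A j) :=
        Finset.sum_le_sum_of_subset_of_nonneg (Finset.erase_subset _ _)
          fun _ _ _ => mul_nonneg measureReal_nonneg measureReal_nonneg

variable [IsFiniteMeasure μ]

theorem tendsto_measureReal_setOf_lt_atTop {f : Ω → ℝ} (hf : Measurable f) :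
    Tendsto (fun y => μ.real {ω | y < f ω}) atTop (𝓝 0) := by
  have h := tendsto_measure_iInter_atTop (μ := μ) (s := fun y : ℝ => {ω | y < f ω})
    (fun y => (hf measurableSet_Ioi).nullMeasurableSet)
    (fun a b hab ω hω => hab.trans_lt hω) ⟨0, measure_ne_top μ _⟩
  have hempty : ⋂ y : ℝ, {ω | y < f ω} = ∅ :=
    Set.eq_empty_of_forall_notMem fun ω hω => lt_irrefl (f ω) (Set.mem_iInter.1 hω (f ω))
  rw [hempty, measure_empty] at h
  simpa [Function.comp_def, measureReal_def] using
    (ENNReal.tendsto_toReal ENNReal.zero_ne_top).comp h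

theorem sum_measureReal_le_measureReal_biUnion_add [DecidableEq ι] {A : ι → Set Ω}
    (hA : ∀ i, MeasurableSet (A i)) (s : Finset ι) :
    ∑ i ∈ s, μ.real (A i) ≤
      μ.real (⋃ i ∈ s, A i) + ∑ i ∈ s, ∑ j ∈ s.erase i, μ.real (A i ∩ A j) := by
  induction s using Finset.induction_on with
  | empty => simp
  | insert a s ha ih =>
    set U := ⋃ i ∈ s, A i
    have hunion : μ.real (A a ∪ U) + μ.real (A a ∩ U) = μ.real (A a) + μ.real U :=
      measureReal_union_add_inter (s.measurableSet_biUnion fun i _ => hA i) (measure_ne_top _ _)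
        (measure_ne_top _ _)
    have hinter : μ.real (A a ∩ U) ≤ ∑ j ∈ s, μ.real (A a ∩ A j) := by
      rw [Set.inter_iUnion₂]
      exact measureReal_biUnion_finset_le _ _
    have hpairs : ∑ i ∈ s, ∑ j ∈ s.erase i, μ.real (A i ∩ A j) ≤
        ∑ i ∈ s, ∑ j ∈ (insert a s).erase i, μ.real (A i ∩ A j) :=
      Finset.sum_le_sum fun i _ => Finset.sum_le_sum_of_subset_of_nonneg
        (Finset.erase_subset_erase _ (Finset.subset_insert _ _)) fun _ _ _ => measureReal_nonneg
    rw [Finset.sum_insert ha, Finset.sum_insert ha, Finset.erase_insert ha,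
      Finset.set_biUnion_insert]
    linarith

variable [Fintype ι] {X : ι → Ω → ℝ}

theorem sum_sub_sq_le_measureReal_lt_sum (hXm : ∀ i, Measurable (X i))
    (hXnn : ∀ i ω, 0 ≤ X i ω) (hindep : Pairwise fun i j => IndepFun (X i) (X j) μ) (x : ℝ) :
    ∑ i, μ.real {ω | x < X i ω} - (∑ i, μ.real {ω | x < X i ω}) ^ 2 ≤
      μ.real {ω | x < ∑ i, X i ω} := by
  classical
  have hsub : ⋃ i ∈ Finset.univ, {ω | x < X i ω} ⊆ {ω | x < ∑ i, X i ω} :=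
    Set.iUnion₂_subset fun i _ ω hω =>
      hω.trans_le (Finset.single_le_sum (fun j _ => hXnn j ω) (Finset.mem_univ i))
  have hbonf := sum_measureReal_le_measureReal_biUnion_add (μ := μ) (A := fun i => {ω | x < X i ω})
    (fun i => hXm i measurableSet_Ioi) Finset.univ
  have hpairs := sum_sum_erase_measureReal_inter_le_sq (μ := μ) Finset.univ
    fun i j hij => (hindep hij).measureReal_inter_setOf_lt x x
  linarith [measureReal_mono (μ := μ) hsub]

theorem measureReal_lt_sum_le_sum_add_sq [Nonempty ι] (hindep : Pairwise fun i j => IndepFun (X i) (X j) μ)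
    (x δ : ℝ) :
    μ.real {ω | x < ∑ i, X i ω} ≤
      ∑ i, μ.real {ω | (1 - (Fintype.card ι - 1) * δ) * x < X i ω} +
        (∑ i, μ.real {ω | δ * x < X i ω}) ^ 2 := by
  classical
  have hsub : {ω | x < ∑ i, X i ω} ⊆
      (⋃ i, {ω | (1 - (Fintype.card ι - 1) * δ) * x < X i ω}) ∪
        ⋃ i, ⋃ j ∈ Finset.univ.erase i, {ω | δ * x < X i ω} ∩ {ω | δ * x < X j ω} := by
    intro ω hω
    rcases exists_lt_or_exists_pair_lt_of_lt_sum δ hω with ⟨i, hi⟩ | ⟨i, j, hij, hi, hj⟩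
    · exact Or.inl (Set.mem_iUnion.2 ⟨i, hi⟩)
    · exact Or.inr (Set.mem_iUnion.2 ⟨i, Set.mem_iUnion₂.2
        ⟨j, Finset.mem_erase.2 ⟨hij.symm, Finset.mem_univ j⟩, hi, hj⟩⟩)
  calc μ.real {ω | x < ∑ i, X i ω}
      ≤ ∑ i, μ.real {ω | (1 - (Fintype.card ι - 1) * δ) * x < X i ω} +
          ∑ i, ∑ j ∈ Finset.univ.erase i,
            μ.real ({ω | δ * x < X i ω} ∩ {ω | δ * x < X j ω}) :=
        (measureReal_mono hsub).trans <| (measureReal_union_le _ _).trans <|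
          add_le_add (measureReal_iUnion_fintype_le _) <|
            (measureReal_iUnion_fintype_le _).trans <|
              Finset.sum_le_sum fun i _ => measureReal_biUnion_finset_le _ _
    _ ≤ _ := add_le_add_right (sum_sum_erase_measureReal_inter_le_sq _
        fun i j hij => (hindep hij).measureReal_inter_setOf_lt (δ * x) (δ * x)) _

end Tails

theorem tail_sum_of_regularly_varying_general
    {Ω : Type*} [MeasurableSpace Ω] (μ : Measure Ω) [IsProbabilityMeasure μ]
    (n : ℕ) (hn : 0 < n) (X : Fin n → Ω → ℝ)
    (hXm : ∀ i, Measurable (X i)) (hXnn : ∀ i ω, 0 ≤ X i ω)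
    (hindep : ProbabilityTheory.iIndepFun X μ)
    (α : ℝ) (L : ℝ → ℝ) (hL : SlowlyVarying L)
    (c : Fin n → ℝ) (hc : ∀ i, 0 < c i)
    (hT : ∀ i, ∀ x : ℝ, 0 < x → (μ {ω | x < X i ω}).toReal = c i * x ^ (-α) * L x) :
    Tendsto (fun x : ℝ =>
        (μ {ω | x < ∑ i, X i ω}).toReal / ∑ i, (μ {ω | x < X i ω}).toReal)
      atTop (nhds 1) := by
  have : Nonempty (Fin n) := ⟨⟨0, hn⟩⟩
  have hpair : Pairwise fun i j => IndepFun (X i) (X j) μ := fun i j hij => hindep.indepFun hij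
  have hC : 0 < ∑ i, c i := Finset.sum_pos (fun i _ => hc i) Finset.univ_nonempty
  have hD : ∀ x, 0 < x → ∑ i, μ.real {ω | x < X i ω} = (∑ i, c i) * x ^ (-α) * L x :=
    fun x hx => by
      rw [Finset.sum_mul, Finset.sum_mul]
      exact Finset.sum_congr rfl fun i _ => hT i x hx
  have hDpos : ∀ᶠ x in atTop, 0 < ∑ i, μ.real {ω | x < X i ω} := by
    filter_upwards [eventually_gt_atTop 0, hL.eventually_ne_zero] with x hx hLx
    refine (Finset.sum_nonneg fun _ _ => measureReal_nonneg).lt_of_ne' ?_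
    rw [hD x hx]
    exact mul_ne_zero (mul_ne_zero hC.ne' (Real.rpow_pos_of_pos hx _).ne') hLx
  have hD0 : Tendsto (fun x => ∑ i, μ.real {ω | x < X i ω}) atTop (𝓝 0) := by
    simpa using tendsto_finsetSum Finset.univ fun i _ => tendsto_measureReal_setOf_lt_atTop (hXm i)
  exact tendsto_div_one_of_quadratic_bounds hD0 hDpos
    (fun t ht => hL.tendsto_div_of_eq_mul_rpow hC.ne' hD ht)
    (.of_forall (sum_sub_sq_le_measureReal_lt_sum hXm hXnn hpair))
    (fun δ => .of_forall (measureReal_lt_sum_le_sum_add_sq hpair · δ))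

/-- If `X₁, …, Xₙ` are independent nonnegative random variables, each regularly
varying at infinity with the same index `α ≥ 0` and comparable tails
(`P[Xᵢ > x] = cᵢ x^{-α} L(x)`), then
`P[X₁ + ⋯ + Xₙ > x] ∼ Σᵢ P[Xᵢ > x]` as `x → ∞`. -/
theorem tail_sum_of_regularly_varying
    {Ω : Type*} [MeasurableSpace Ω] (μ : Measure Ω) [IsProbabilityMeasure μ]
    (n : ℕ) (hn : 0 < n) (X : Fin n → Ω → ℝ)
    (hXm : ∀ i, Measurable (X i)) (hXnn : ∀ i ω, 0 ≤ X i ω)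
    (hindep : ProbabilityTheory.iIndepFun X μ)
    (α : ℝ) (hα : 0 ≤ α) (L : ℝ → ℝ) (hL : SlowlyVarying L)
    (hLpos : ∀ x : ℝ, 0 < x → 0 < L x)
    (c : Fin n → ℝ) (hc : ∀ i, 0 < c i)
    (hT : ∀ i, ∀ x : ℝ, 0 < x → (μ {ω | x < X i ω}).toReal = c i * x ^ (-α) * L x) :
    Tendsto (fun x : ℝ =>
        (μ {ω | x < ∑ i, X i ω}).toReal / ∑ i, (μ {ω | x < X i ω}).toReal)
      atTop (nhds 1) :=
  tail_sum_of_regularly_varying_general μ n hn X hXm hXnn hindep α L hL c hc hT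
end

section
/- Let X₁, X₂ be independent nonnegative random variables with X₁ regularly varying of index α ≥ 0, and suppose P[X₂ > x] = o(P[X₁ > x]) as x → ∞. Then P[X₁ + X₂ > x] ∼ P[X₁ > x] as x → ∞. -/
open MeasureTheory Filter Topology

/-!
A union bound splits the event `{x < X₁ + X₂}` into `{(1 - δ) x < X₁}` and `{δ x < X₂}`.
By regular variation the first has probability `≈ (1 - δ)^(-α) P[X₁ > x]`, and the second is
`o(P[X₁ > δ x]) = o(P[X₁ > x])`, again by regular variation. Letting `δ → 0` gives the upper
bound `limsup ≤ 1`; the lower bound `P[X₁ + X₂ > x] ≥ P[X₁ > x]` holds since `X₂ ≥ 0`.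
-/

theorem SlowlyVarying.tendsto_comp_mul_div {L F : ℝ → ℝ} {α : ℝ} (hL : SlowlyVarying L)
    (hF : ∀ x : ℝ, 0 < x → F x = x ^ (-α) * L x) {t : ℝ} (ht : 0 < t) :
    Tendsto (fun x => F (t * x) / F x) atTop (𝓝 (t ^ (-α))) := by
  have hlim : Tendsto (fun x => t ^ (-α) * (L (t * x) / L x)) atTop (𝓝 (t ^ (-α))) := by
    simpa using (hL t ht).const_mul (t ^ (-α))
  refine hlim.congr' ?_
  filter_upwards [eventually_gt_atTop 0] with x hx
  have hxα : x ^ (-α) ≠ 0 := (Real.rpow_pos_of_pos hx _).ne'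
  rw [hF _ (mul_pos ht hx), hF x hx, Real.mul_rpow ht.le hx.le, mul_assoc,
    mul_left_comm, mul_div_mul_left _ _ hxα, mul_div_assoc]

theorem tendsto_comp_mul_div_eq_zero {F G : ℝ → ℝ} {δ c : ℝ} (hδ : 0 < δ)
    (hG : Tendsto (fun x => G x / F x) atTop (𝓝 0))
    (hF : Tendsto (fun x => F (δ * x) / F x) atTop (𝓝 c))
    (hF₀ : ∀ᶠ x in atTop, F x ≠ 0) :
    Tendsto (fun x => G (δ * x) / F x) atTop (𝓝 0) := by
  have hδx : Tendsto (fun x => δ * x) atTop atTop := tendsto_id.const_mul_atTop hδ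
  have hprod := (hG.comp hδx).mul hF
  rw [zero_mul] at hprod
  refine hprod.congr' ?_
  filter_upwards [hδx.eventually hF₀] with x hx
  exact div_mul_div_cancel₀ hx

theorem exists_one_sub_rpow_lt (α : ℝ) {b : ℝ} (hb : 1 < b) :
    ∃ δ : ℝ, 0 < δ ∧ δ < 1 ∧ (1 - δ) ^ (-α) < b := by
  have hcont : ContinuousAt (fun δ : ℝ => (1 - δ) ^ (-α)) 0 :=
    (continuousAt_const.sub continuousAt_id).rpow_const (Or.inl (by norm_num))
  have hlt : ∀ᶠ δ in 𝓝 (0 : ℝ), (1 - δ) ^ (-α) < b :=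
    hcont.eventually_lt continuousAt_const (by simpa using hb)
  obtain ⟨δ, ⟨hδb, hδ1⟩, hδ0⟩ :=
    (((hlt.and (gt_mem_nhds zero_lt_one)).filter_mono nhdsWithin_le_nhds).and
      self_mem_nhdsWithin).exists (f := 𝓝[>] (0 : ℝ))
  exact ⟨δ, hδ0, hδ1, hδb⟩

section Tails

variable {Ω : Type*} [MeasurableSpace Ω] {μ : Measure Ω} [IsFiniteMeasure μ] {X₁ X₂ : Ω → ℝ}

theorem measureReal_lt_le_measureReal_lt_add (hX₂ : ∀ ω, 0 ≤ X₂ ω) (x : ℝ) :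
    μ.real {ω | x < X₁ ω} ≤ μ.real {ω | x < X₁ ω + X₂ ω} :=
  measureReal_mono fun ω (hω : x < X₁ ω) => show x < X₁ ω + X₂ ω by linarith [hX₂ ω]

theorem measureReal_add_lt_le (a b : ℝ) :
    μ.real {ω | a + b < X₁ ω + X₂ ω} ≤ μ.real {ω | a < X₁ ω} + μ.real {ω | b < X₂ ω} := by
  refine (measureReal_mono fun ω (hω : a + b < X₁ ω + X₂ ω) => ?_).trans
    (measureReal_union_le _ _)
  by_contra h
  simp only [Set.mem_union, Set.mem_ofPred_eq, not_or, not_lt] at h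
  linarith [h.1, h.2]

end Tails

theorem tail_add_of_little_o_general
    {Ω : Type*} [MeasurableSpace Ω] (μ : Measure Ω) [IsProbabilityMeasure μ]
    (X₁ X₂ : Ω → ℝ)
    (hX₂nn : ∀ ω, 0 ≤ X₂ ω)
    (α : ℝ) (L : ℝ → ℝ) (hL : SlowlyVarying L)
    (hT₁ : ∀ x : ℝ, 0 < x → (μ {ω | x < X₁ ω}).toReal = x ^ (-α) * L x)
    (hpos₁ : ∀ x : ℝ, 0 < x → 0 < (μ {ω | x < X₁ ω}).toReal)
    (hsmall : Tendsto (fun x : ℝ =>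
        (μ {ω | x < X₂ ω}).toReal / (μ {ω | x < X₁ ω}).toReal) atTop (nhds 0)) :
    Tendsto (fun x : ℝ =>
        (μ {ω | x < X₁ ω + X₂ ω}).toReal / (μ {ω | x < X₁ ω}).toReal)
      atTop (nhds 1) := by
  refine tendsto_order.2 ⟨fun b hb => ?_, fun b hb => ?_⟩
  · filter_upwards [eventually_gt_atTop 0] with x hx
    exact hb.trans_le <|
      (one_le_div (hpos₁ x hx)).2 (measureReal_lt_le_measureReal_lt_add hX₂nn x)
  · obtain ⟨δ, hδ0, hδ1, hδb⟩ := exists_one_sub_rpow_lt α hb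
    have hF₀ : ∀ᶠ x in atTop, (μ {ω | x < X₁ ω}).toReal ≠ 0 :=
      (eventually_gt_atTop 0).mono fun x hx => (hpos₁ x hx).ne'
    have hbound := (hL.tendsto_comp_mul_div hT₁ (sub_pos.2 hδ1)).add
      (tendsto_comp_mul_div_eq_zero hδ0 hsmall (hL.tendsto_comp_mul_div hT₁ hδ0) hF₀)
    rw [add_zero] at hbound
    filter_upwards [hbound.eventually_lt_const hδb, eventually_gt_atTop 0] with x hlt hx
    have hsplit := measureReal_add_lt_le (μ := μ) (X₁ := X₁) (X₂ := X₂) ((1 - δ) * x) (δ * x)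
    rw [show (1 - δ) * x + δ * x = x by ring] at hsplit
    calc _ ≤ (μ.real {ω | (1 - δ) * x < X₁ ω} + μ.real {ω | δ * x < X₂ ω}) /
          (μ {ω | x < X₁ ω}).toReal := by gcongr; exact hsplit
      _ < b := by rwa [add_div]

/-- If `X₁, X₂` are independent nonnegative random variables, `X₁` regularly varying
of index `α ≥ 0`, and `P[X₂ > x] = o(P[X₁ > x])` as `x → ∞`, then
`P[X₁ + X₂ > x] ∼ P[X₁ > x]` as `x → ∞`. -/
theorem tail_add_of_little_o
    {Ω : Type*} [MeasurableSpace Ω] (μ : Measure Ω) [IsProbabilityMeasure μ]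
    (X₁ X₂ : Ω → ℝ) (hX₁m : Measurable X₁) (hX₂m : Measurable X₂)
    (hX₁nn : ∀ ω, 0 ≤ X₁ ω) (hX₂nn : ∀ ω, 0 ≤ X₂ ω)
    (hindep : ProbabilityTheory.IndepFun X₁ X₂ μ)
    (α : ℝ) (hα : 0 ≤ α) (L : ℝ → ℝ) (hL : SlowlyVarying L)
    (hT₁ : ∀ x : ℝ, 0 < x → (μ {ω | x < X₁ ω}).toReal = x ^ (-α) * L x)
    (hpos₁ : ∀ x : ℝ, 0 < x → 0 < (μ {ω | x < X₁ ω}).toReal)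
    (hsmall : Tendsto (fun x : ℝ =>
        (μ {ω | x < X₂ ω}).toReal / (μ {ω | x < X₁ ω}).toReal) atTop (nhds 0)) :
    Tendsto (fun x : ℝ =>
        (μ {ω | x < X₁ ω + X₂ ω}).toReal / (μ {ω | x < X₁ ω}).toReal)
      atTop (nhds 1) :=
  tail_add_of_little_o_general μ X₁ X₂ hX₂nn α L hL hT₁ hpos₁ hsmall
end

section
/- Let (Aₙ, Bₙ) be an i.i.d. sequence of pairs of real random variables with P[A = 0] = 0, E[log|A|] < 0 and E[log⁺|B|] < ∞. Then the infinite random series Z := Σ_{k≥1} (∏_{i=1}^{k−1} Aᵢ) B_k converges almost surely, and its law is a solution of the fixed-point distributional equation Z =ᵈ A Z + B with Z independent of (A,B). -/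
/-!
By the strong law of large numbers, `(∑ i < k, log |Aᵢ|) / k → E[log |A|] < 0` and, since the
Cesàro means of `log⁺ |Bₖ|` converge, `log⁺ |Bₖ| / k → 0` almost surely. Hence the `k`-th term
`|A₀ ⋯ Aₖ₋₁| |Bₖ| ≤ exp (∑ i < k, log |Aᵢ| + log⁺ |Bₖ|)` is eventually below
`exp (k E[log |A|] / 2)`, a geometric sequence.

The perpetuity is a fixed measurable function of the i.i.d. sequence `(Aₙ, Bₙ)`. The shifted
sequence `(Aₙ₊₁, Bₙ₊₁)` has the same product law and is independent of `(A₀, B₀)`, which gives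
the distributional identity; `Z = A₀ Z₁ + B₀` is just splitting off the first term of the series.
-/

open MeasureTheory Filter ProbabilityTheory Topology Finset Real

theorem Measurable.real_tsum {α : Type*} [MeasurableSpace α] {f : ℕ → α → ℝ}
    (hf : ∀ k, Measurable (f k)) : Measurable (fun x => ∑' k, f k x) := by
  -- off the measurable set `C` of (absolute) summability, `∑'` takes the junk value `0`
  set C := {x | Summable fun k => |f k x|}
  have hC : MeasurableSet C := by
    have hC_eq : C = {x | ∃ c, Tendsto (fun n => ∑ k ∈ range n, |f k x|) atTop (𝓝 c)} := by
      ext x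
      simp only [C, Set.mem_ofPred_eq, Summable,
        hasSum_iff_tendsto_nat_of_nonneg fun k => abs_nonneg (f k x)]
    rw [hC_eq]
    exact measurableSet_exists_tendsto fun n => Finset.measurable_sum _ fun k _ => (hf k).abs
  refine measurable_of_tendsto_metrizable
    (fun n => (Finset.measurable_sum (range n) fun k _ => hf k).indicator hC) ?_
  refine tendsto_pi_nhds.2 fun x => ?_
  by_cases hx : x ∈ C
  · simpa only [Set.indicator_of_mem hx] using hx.of_abs.hasSum.tendsto_sum_nat
  · simp only [Set.indicator_of_notMem hx, tsum_eq_zero_of_not_summable (mt Summable.abs hx)]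
    exact tendsto_const_nhds

theorem tendsto_div_natCast_zero_of_tendsto_cesaro {u : ℕ → ℝ} {c : ℝ}
    (h : Tendsto (fun n : ℕ => (∑ i ∈ range n, u i) / n) atTop (𝓝 c)) :
    Tendsto (fun n : ℕ => u n / n) atTop (𝓝 0) := by
  -- `u n / n = (∑ i ∈ range (n + 1), u i) / (n + 1) * ((n + 1) / n) - (∑ i ∈ range n, u i) / n`
  have h_ratio : Tendsto (fun n : ℕ => ((1 : ℝ) + 1 * n) / (0 + 1 * n)) atTop (𝓝 (1 / 1)) :=
    tendsto_add_mul_div_add_mul_atTop_nhds 1 0 1 one_ne_zero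
  have h_diff := (((tendsto_add_atTop_iff_nat 1).2 h).mul h_ratio).sub h
  rw [div_one, mul_one, sub_self] at h_diff
  refine h_diff.congr' ((eventually_ne_atTop 0).mono fun n hn => ?_)
  have hn : (n : ℝ) ≠ 0 := Nat.cast_ne_zero.2 hn
  simp only [sum_range_succ, Nat.cast_add, Nat.cast_one]
  field_simp
  ring

theorem summable_exp_sum_add_of_tendsto {a b : ℕ → ℝ} {m : ℝ} (hm : m < 0)
    (ha : Tendsto (fun n : ℕ => (∑ i ∈ range n, a i) / n) atTop (𝓝 m))
    (hb : Tendsto (fun n : ℕ => b n / n) atTop (𝓝 0)) :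
    Summable fun k => exp (∑ i ∈ range k, a i + b k) := by
  have h_rate : ∀ᶠ k : ℕ in atTop, (∑ i ∈ range k, a i) / k + b k / k < m / 2 :=
    (tendsto_order.1 (by simpa using ha.add hb)).2 _ (by linarith)
  refine .of_norm_bounded_eventually_nat
    (summable_geometric_of_lt_one (exp_pos (m / 2)).le (exp_lt_one_iff.2 (by linarith))) ?_
  filter_upwards [h_rate, eventually_gt_atTop 0] with k hk hk0
  rw [← add_div, div_lt_iff₀ (Nat.cast_pos.2 hk0)] at hk
  rw [norm_of_nonneg (exp_pos _).le, ← exp_nat_mul, exp_le_exp]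
  linarith

theorem abs_le_exp_max_log_abs (x : ℝ) : |x| ≤ exp (max (log |x|) 0) := by
  rcases eq_or_ne x 0 with rfl | hx
  · simp
  · calc |x| = exp (log |x|) := (exp_log (abs_pos.2 hx)).symm
      _ ≤ exp (max (log |x|) 0) := exp_le_exp.2 (le_max_left _ _)

theorem summable_abs_prod_mul_abs_of_tendsto {a b : ℕ → ℝ} {m c : ℝ} (ha₀ : ∀ i, a i ≠ 0)
    (hm : m < 0) (ha : Tendsto (fun n : ℕ => (∑ i ∈ range n, log |a i|) / n) atTop (𝓝 m))
    (hb : Tendsto (fun n : ℕ => (∑ i ∈ range n, max (log |b i|) 0) / n) atTop (𝓝 c)) :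
    Summable fun k => |∏ i ∈ range k, a i| * |b k| := by
  refine (summable_exp_sum_add_of_tendsto hm ha
    (tendsto_div_natCast_zero_of_tendsto_cesaro hb)).of_nonneg_of_le (fun k => by positivity)
    fun k => ?_
  rw [exp_add, exp_sum, abs_prod]
  gcongr with i
  · exact (exp_log (abs_pos.2 (ha₀ i))).ge
  · exact abs_le_exp_max_log_abs _

noncomputable def perpetuity (x : ℕ → ℝ × ℝ) : ℝ := ∑' k, (∏ i ∈ range k, (x i).1) * (x k).2

theorem perpetuity_eq_fst_mul_perpetuity_shift_add_snd {x : ℕ → ℝ × ℝ}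
    (hx : Summable fun k => (∏ i ∈ range k, (x i).1) * (x k).2) :
    perpetuity x = (x 0).1 * perpetuity (fun n => x (n + 1)) + (x 0).2 := by
  rw [perpetuity, hx.tsum_eq_zero_add, perpetuity, ← tsum_mul_left]
  simp only [prod_range_succ', prod_range_zero, one_mul, mul_assoc, mul_comm (x 0).1]
  ring

theorem measurable_perpetuity : Measurable perpetuity :=
  .real_tsum fun k => by fun_prop

section Independence

variable {Ω ι β : Type*} [MeasurableSpace Ω] {μ : Measure Ω} [MeasurableSpace β]
  {f : ι → Ω → β}

theorem ProbabilityTheory.iIndepFun.indepFun_restrict_of_disjoint (hf : ∀ i, Measurable (f i))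
    (h : iIndepFun f μ) {S T : Set ι} (hST : Disjoint S T) :
    IndepFun (fun ω (i : S) => f i ω) (fun ω (i : T) => f i ω) μ := by
  have hcomap (U : Set ι) :
      MeasurableSpace.comap (fun ω (i : U) => f i ω) (inferInstance : MeasurableSpace (U → β))
        = ⨆ i ∈ U, MeasurableSpace.comap (f i) ‹MeasurableSpace β› := by
    simp only [MeasurableSpace.pi, MeasurableSpace.comap_iSup, MeasurableSpace.comap_comp]
    exact iSup_subtype'' U fun i => MeasurableSpace.comap (f i) _
  rw [IndepFun_iff_Indep, hcomap, hcomap]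
  exact indep_iSup_of_disjoint (fun i => (hf i).comap_le) h hST

theorem ProbabilityTheory.iIndepFun.indepFun_shift_zero {f : ℕ → Ω → β}
    (hf : ∀ i, Measurable (f i)) (h : iIndepFun f μ) : IndepFun (fun ω n => f (n + 1) ω) (f 0) μ :=
  (h.indepFun_restrict_of_disjoint hf (S := Set.Ioi 0) (T := {0}) (by simp)).comp
    (φ := fun (y : Set.Ioi 0 → β) n => y ⟨n + 1, n.succ_pos⟩)
    (ψ := fun (y : ({0} : Set ℕ) → β) => y ⟨0, rfl⟩) (by fun_prop) (measurable_pi_apply _)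

theorem ProbabilityTheory.iIndepFun.identDistrib_comp_of_injective (hf : ∀ i, Measurable (f i))
    (h : iIndepFun f μ) {i₀ : ι} (hid : ∀ i, IdentDistrib (f i) (f i₀) μ μ) {g : ι → ι}
    (hg : g.Injective) : IdentDistrib (fun ω i => f (g i) ω) (fun ω i => f i ω) μ μ where
  aemeasurable_fst := (measurable_pi_lambda _ fun i => hf (g i)).aemeasurable
  aemeasurable_snd := (measurable_pi_lambda _ hf).aemeasurable
  map_eq := by
    have := h.isProbabilityMeasure
    rw [(h.precomp hg).map_fun_eq_infinitePi_map (fun i => hf (g i)),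
      h.map_fun_eq_infinitePi_map hf]
    congr 1
    funext i
    rw [(hid (g i)).map_eq, (hid i).map_eq]

end Independence

theorem strong_law_ae_real_comp {Ω β : Type*} [MeasurableSpace Ω] [MeasurableSpace β]
    {μ : Measure Ω} {X : ℕ → Ω → β} (hindep : iIndepFun X μ)
    (hident : ∀ n, IdentDistrib (X n) (X 0) μ μ) {φ : β → ℝ} (hφ : Measurable φ)
    (hint : Integrable (fun ω => φ (X 0 ω)) μ) :
    ∀ᵐ ω ∂μ, Tendsto (fun n : ℕ => (∑ i ∈ range n, φ (X i ω)) / n) atTop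
      (𝓝 (∫ ω, φ (X 0 ω) ∂μ)) :=
  strong_law_ae_real (fun n ω => φ (X n ω)) hint
    (fun _ _ hij => (hindep.indepFun hij).comp hφ hφ) fun n => (hident n).comp hφ

theorem ae_summable_abs_prod_mul_abs {Ω : Type*} [MeasurableSpace Ω] {μ : Measure Ω}
    {A B : ℕ → Ω → ℝ} (hindep : iIndepFun (fun n ω => (A n ω, B n ω)) μ)
    (hident : ∀ n, IdentDistrib (fun ω => (A n ω, B n ω)) (fun ω => (A 0 ω, B 0 ω)) μ μ)
    (hA0 : μ {ω | A 0 ω = 0} = 0) (hAint : Integrable (fun ω => log |A 0 ω|) μ)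
    (hAneg : ∫ ω, log |A 0 ω| ∂μ < 0) (hBint : Integrable (fun ω => max (log |B 0 ω|) 0) μ) :
    ∀ᵐ ω ∂μ, Summable fun k => |∏ i ∈ range k, A i ω| * |B k ω| := by
  have hA_ne : ∀ᵐ ω ∂μ, ∀ i, A i ω ≠ 0 := ae_all_iff.2 fun i => by
    have h : μ {ω | A i ω = 0} = μ {ω | A 0 ω = 0} :=
      ((hident i).comp measurable_fst).measure_mem_eq (measurableSet_singleton 0)
    simpa only [ae_iff, ne_eq, not_not] using h.trans hA0
  filter_upwards [hA_ne,
    strong_law_ae_real_comp hindep hident (φ := fun p => log |p.1|) (by fun_prop) hAint,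
    strong_law_ae_real_comp hindep hident (φ := fun p => max (log |p.2|) 0) (by fun_prop) hBint]
    with ω hA_ne hA hB
  exact summable_abs_prod_mul_abs_of_tendsto hA_ne hAneg hA hB

theorem perpetuity_exists_general
    {Ω : Type*} [MeasurableSpace Ω] (μ : Measure Ω)
    (A B : ℕ → Ω → ℝ)
    (hAm : ∀ n, Measurable (A n)) (hBm : ∀ n, Measurable (B n))
    (hindep : iIndepFun (fun n ω => (A n ω, B n ω)) μ)
    (hident : ∀ n, IdentDistrib (fun ω => (A n ω, B n ω)) (fun ω => (A 0 ω, B 0 ω)) μ μ)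
    (hA0 : μ {ω | A 0 ω = 0} = 0)
    (hAint : Integrable (fun ω => Real.log |A 0 ω|) μ)
    (hAneg : ∫ ω, Real.log |A 0 ω| ∂μ < 0)
    (hBint : Integrable (fun ω => max (Real.log |B 0 ω|) 0) μ) :
    (∀ᵐ ω ∂μ, Summable (fun k : ℕ => |∏ i ∈ Finset.range k, A i ω| * |B k ω|)) ∧
    IdentDistrib (fun ω => ∑' k : ℕ, (∏ i ∈ Finset.range k, A (i + 1) ω) * B (k + 1) ω)
      (fun ω => ∑' k : ℕ, (∏ i ∈ Finset.range k, A i ω) * B k ω) μ μ ∧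
    IndepFun (fun ω => ∑' k : ℕ, (∏ i ∈ Finset.range k, A (i + 1) ω) * B (k + 1) ω)
      (fun ω => (A 0 ω, B 0 ω)) μ ∧
    (∀ᵐ ω ∂μ, (∑' k : ℕ, (∏ i ∈ Finset.range k, A i ω) * B k ω)
        = A 0 ω * (∑' k : ℕ, (∏ i ∈ Finset.range k, A (i + 1) ω) * B (k + 1) ω)
          + B 0 ω) := by
  have hX : ∀ n, Measurable fun ω => (A n ω, B n ω) := fun n => (hAm n).prodMk (hBm n)
  have hsum := ae_summable_abs_prod_mul_abs hindep hident hA0 hAint hAneg hBint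
  refine ⟨hsum,
    (hindep.identDistrib_comp_of_injective hX hident (add_left_injective 1)).comp
      measurable_perpetuity,
    (hindep.indepFun_shift_zero hX).comp measurable_perpetuity measurable_id, ?_⟩
  filter_upwards [hsum] with ω hω
  exact perpetuity_eq_fst_mul_perpetuity_shift_add_snd (x := fun n => (A n ω, B n ω))
    (.of_abs (by simpa only [abs_mul] using hω))

/-- Existence of the perpetuity: if `(Aₙ, Bₙ)` is an i.i.d. sequence with
`P[A = 0] = 0`, `E[log |A|] < 0` and `E[log⁺ |B|] < ∞`, then the series
`Z = Σ_k (∏_{i<k} Aᵢ) B_k` converges (absolutely) a.s., and its law solves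
`Z =ᵈ A Z + B` with `Z` independent of `(A, B)`: the shifted perpetuity
`Z₁ = Σ_k (∏_{i<k} A_{i+1}) B_{k+1}` has the same law as `Z`, is independent of
`(A₀, B₀)`, and a.s. `Z = A₀ Z₁ + B₀`. -/
theorem perpetuity_exists
    {Ω : Type*} [MeasurableSpace Ω] (μ : Measure Ω) [IsProbabilityMeasure μ]
    (A B : ℕ → Ω → ℝ)
    (hAm : ∀ n, Measurable (A n)) (hBm : ∀ n, Measurable (B n))
    (hindep : iIndepFun (fun n ω => (A n ω, B n ω)) μ)
    (hident : ∀ n, IdentDistrib (fun ω => (A n ω, B n ω)) (fun ω => (A 0 ω, B 0 ω)) μ μ)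
    (hA0 : μ {ω | A 0 ω = 0} = 0)
    (hAint : Integrable (fun ω => Real.log |A 0 ω|) μ)
    (hAneg : ∫ ω, Real.log |A 0 ω| ∂μ < 0)
    (hBint : Integrable (fun ω => max (Real.log |B 0 ω|) 0) μ) :
    (∀ᵐ ω ∂μ, Summable (fun k : ℕ => |∏ i ∈ Finset.range k, A i ω| * |B k ω|)) ∧
    IdentDistrib (fun ω => ∑' k : ℕ, (∏ i ∈ Finset.range k, A (i + 1) ω) * B (k + 1) ω)
      (fun ω => ∑' k : ℕ, (∏ i ∈ Finset.range k, A i ω) * B k ω) μ μ ∧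
    IndepFun (fun ω => ∑' k : ℕ, (∏ i ∈ Finset.range k, A (i + 1) ω) * B (k + 1) ω)
      (fun ω => (A 0 ω, B 0 ω)) μ ∧
    (∀ᵐ ω ∂μ, (∑' k : ℕ, (∏ i ∈ Finset.range k, A i ω) * B k ω)
        = A 0 ω * (∑' k : ℕ, (∏ i ∈ Finset.range k, A (i + 1) ω) * B (k + 1) ω)
          + B 0 ω) :=
  perpetuity_exists_general μ A B hAm hBm hindep hident hA0 hAint hAneg hBint
end
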